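/- arXiv:2307.08212 — 2 statements merged into one kernel-verified Lean document; each statement's English description precedes it below -/
import Mathlib

section
/- Consider list colorings on a finite simple graph G = (V,E) of maximum degree Δ ≥ 3, where each vertex v has a color list L_v with deg_G(v) + 2 ≤ |L_v| ≤ q. For every pinning η on Λ ⊆ V, every vertex v ∈ V∖Λ, and every color c ∈ L_v such that η extends to a full list coloring assigning color c to v, the conditional marginal probability satisfies μ^η_v(c) ≥ 1/(2^Δ q). -/
open scoped BigOperators Classical

noncomputable section

/-- Expectation of `f` under the (finitely supported) density `p`. -/
def pmean {α : Type*} [Fintype α] (p f : α → ℝ) : ℝ := ∑ a, p a * f a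

/-- Variance of `f` under the density `p`. -/
def pvar {α : Type*} [Fintype α] (p f : α → ℝ) : ℝ :=
  pmean p (fun a => (f a - pmean p f) ^ 2)

variable {V : Type*} [Fintype V] [DecidableEq V] {C : Type*} [Fintype C] [DecidableEq C]

/-- The degree of `v` in `G`. -/
def gdeg (G : SimpleGraph V) (v : V) : ℕ :=
  (Finset.univ.filter (fun u => G.Adj v u)).card

/-- `σ` is a proper list coloring: each vertex gets a color from its own list and
adjacent vertices get distinct colors. -/
def isListColoring (G : SimpleGraph V) (L : V → Finset C) (σ : V → C) : Prop :=
  (∀ v, σ v ∈ L v) ∧ ∀ u v, G.Adj u v → σ u ≠ σ v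

/-- The uniform distribution over the proper list colorings of `G`. -/
def colMu (G : SimpleGraph V) (L : V → Finset C) : (V → C) → ℝ :=
  fun σ => (if isListColoring G L σ then 1 else 0) /
    ((Finset.univ.filter (fun τ : V → C => isListColoring G L τ)).card : ℝ)

/-- The conditional density of `μ` given that the configuration agrees with `σ`
outside the (free) set `B`. -/
def condD (μ : (V → C) → ℝ) (B : Finset V) (σ : V → C) : (V → C) → ℝ :=
  fun τ => if ∀ v, v ∉ B → τ v = σ v
    then μ τ / ∑ τ' ∈ Finset.univ.filter (fun τ' : V → C => ∀ v, v ∉ B → τ' v = σ v), μ τ'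
    else 0

/-! The marginal `μ^η_v(c)` is the fraction of colorings extending `η` that give `v` the color
`c`. Recoloring `v` to `c` and greedily repairing the neighbours of `v` that carried `c` (possible
because every list is longer than the degree) maps the colorings extending `η` into those that
moreover give `v` the color `c`. A coloring is recovered from its image, the set of neighbours of
`v` it colors `c`, and its color at `v`, so this map is at most `2 ^ Δ * q`-to-one. -/

section

variable {V C : Type*} [Fintype V] {G : SimpleGraph V} {L : V → Finset C}

lemma exists_mem_forall_adj_ne (σ : V → C) {u : V} (hu : gdeg G u < (L u).card) :
    ∃ d ∈ L u, ∀ w, G.Adj u w → σ w ≠ d := by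
  obtain ⟨d, hd⟩ : (L u \ (Finset.univ.filter (G.Adj u)).image σ).Nonempty := by
    rw [Finset.sdiff_nonempty]
    exact fun hsub => (Finset.card_le_card hsub).trans Finset.card_image_le |>.not_gt hu
  obtain ⟨hdL, hdσ⟩ := Finset.mem_sdiff.1 hd
  exact ⟨d, hdL, fun w hw hwd => hdσ (Finset.mem_image.2 ⟨w, by simpa using hw, hwd⟩)⟩

lemma exists_isListColoring_eqOn_compl (hL : ∀ u, gdeg G u < (L u).card) (S : Finset V)
    (σ : V → C) (hσL : ∀ u ∉ S, σ u ∈ L u)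
    (hσ : ∀ a b, G.Adj a b → a ∉ S → b ∉ S → σ a ≠ σ b) :
    ∃ τ, isListColoring G L τ ∧ ∀ u ∉ S, τ u = σ u := by
  induction S using Finset.induction_on generalizing σ with
  | empty => exact ⟨σ, ⟨fun u => hσL u (by simp), fun a b h => hσ a b h (by simp) (by simp)⟩,
      fun _ _ => rfl⟩
  | insert u S huS ih =>
    obtain ⟨d, hdL, hd⟩ := exists_mem_forall_adj_ne σ (hL u)
    have hσ'L : ∀ w ∉ S, Function.update σ u d w ∈ L w := by
      intro w hw
      rcases eq_or_ne w u with rfl | hwu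
      · simpa using hdL
      · simpa [hwu] using hσL w (by simp [hwu, hw])
    have hσ' : ∀ a b, G.Adj a b → a ∉ S → b ∉ S →
        Function.update σ u d a ≠ Function.update σ u d b := by
      intro a b hab ha hb
      rcases eq_or_ne a u with rfl | hau
      · simpa [(G.ne_of_adj hab).symm] using (hd b hab).symm
      rcases eq_or_ne b u with rfl | hbu
      · simpa [hau] using hd a hab.symm
      simpa [hau, hbu] using hσ a b hab (by simp [hau, ha]) (by simp [hbu, hb])
    obtain ⟨τ, hτ, hτσ⟩ := ih _ hσ'L hσ'
    refine ⟨τ, hτ, fun w hw => ?_⟩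
    have hwu : w ≠ u := fun h => hw (by simp [h])
    rw [hτσ w (fun h => hw (Finset.mem_insert_of_mem h)), Function.update_of_ne hwu]

lemma exists_recolor (hL : ∀ u, gdeg G u < (L u).card) {v : V} {c : C} (hc : c ∈ L v)
    {σ : V → C} (hσ : isListColoring G L σ) :
    ∃ τ, isListColoring G L τ ∧ τ v = c ∧ ∀ u ≠ v, ¬(G.Adj v u ∧ σ u = c) → τ u = σ u := by
  set S := Finset.univ.filter (fun u => G.Adj v u ∧ σ u = c)
  have hvS : v ∉ S := by simp [S]
  have hσ'L : ∀ u ∉ S, Function.update σ v c u ∈ L u := by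
    intro u _
    rcases eq_or_ne u v with rfl | huv
    · simpa using hc
    · simpa [huv] using hσ.1 u
  have hσ' : ∀ a b, G.Adj a b → a ∉ S → b ∉ S →
      Function.update σ v c a ≠ Function.update σ v c b := by
    intro a b hab ha hb
    rcases eq_or_ne a v with rfl | hav
    · have hba : b ≠ a := (G.ne_of_adj hab).symm
      simp only [S, Finset.mem_filter, Finset.mem_univ, true_and, not_and] at hb
      simpa [hba, eq_comm] using hb hab
    rcases eq_or_ne b v with rfl | hbv
    · simp only [S, Finset.mem_filter, Finset.mem_univ, true_and, not_and] at ha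
      simpa [hav] using ha hab.symm
    simpa [hav, hbv] using hσ.2 a b hab
  obtain ⟨τ, hτ, hτσ⟩ := exists_isListColoring_eqOn_compl hL S _ hσ'L hσ'
  refine ⟨τ, hτ, by simpa using hτσ v hvS, fun u huv hu => ?_⟩
  rw [hτσ u (by simpa [S] using hu), Function.update_of_ne huv]

lemma card_le_two_pow_gdeg_mul_card {v : V} {c : C}
    {A B : Finset (V → C)} {f : (V → C) → V → C} (hmaps : ∀ σ ∈ A, f σ ∈ B)
    (hvL : ∀ σ ∈ A, σ v ∈ L v)
    (hf : ∀ σ ∈ A, ∀ u ≠ v, ¬(G.Adj v u ∧ σ u = c) → f σ u = σ u) :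
    A.card ≤ 2 ^ gdeg G v * (L v).card * B.card := by
  refine Finset.card_le_mul_card_image_of_maps_to hmaps _ fun τ _ => ?_
  set N := Finset.univ.filter (G.Adj v)
  have hkey : Set.InjOn (fun σ : V → C => (N.filter (fun u => σ u = c), σ v))
      (A.filter (fun σ => f σ = τ)) := by
    intro σ₁ h₁ σ₂ h₂ heq
    simp only [Finset.mem_coe, Finset.mem_filter] at h₁ h₂
    obtain ⟨hN, hv⟩ := Prod.ext_iff.1 heq
    funext u
    rcases eq_or_ne u v with rfl | huv
    · exact hv
    have hc : G.Adj v u ∧ σ₁ u = c ↔ G.Adj v u ∧ σ₂ u = c := by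
      simpa [N] using congrArg (u ∈ ·) hN
    by_cases h : G.Adj v u ∧ σ₁ u = c
    · rw [h.2, (hc.1 h).2]
    · rw [← hf σ₁ h₁.1 u huv h, ← hf σ₂ h₂.1 u huv (hc.not.1 h), h₁.2, h₂.2]
  calc (A.filter (fun σ => f σ = τ)).card ≤ (N.powerset ×ˢ L v).card :=
        Finset.card_le_card_of_injOn _ (fun σ hσ => Finset.mem_product.2
          ⟨Finset.mem_powerset.2 (Finset.filter_subset _ _),
            hvL σ (Finset.mem_filter.1 hσ).1⟩) hkey
    _ = 2 ^ gdeg G v * (L v).card := by simp [N, gdeg]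

end

section

variable {V C : Type*} [Fintype V] [DecidableEq V] [Fintype C]
  {G : SimpleGraph V} {L : V → Finset C}

variable (G L) in
def pinnedColorings [DecidableEq C] (Λ : Finset V) (η : V → C) : Finset (V → C) :=
  Finset.univ.filter (fun σ => isListColoring G L σ ∧ ∀ u ∈ Λ, σ u = η u)

lemma sum_colMu (s : Finset (V → C)) :
    ∑ τ ∈ s, colMu G L τ = (s.filter (isListColoring G L)).card /
      (Finset.univ.filter (isListColoring G L)).card := by
  simp only [colMu, ← Finset.sum_div, Finset.sum_boole]

lemma sum_condD_colMu [DecidableEq C] (P : (V → C) → Prop) [DecidablePred P] (Λ : Finset V)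
    (η : V → C) :
    ∑ τ ∈ Finset.univ.filter P, condD (colMu G L) Λᶜ η τ =
      ((pinnedColorings G L Λ η).filter P).card / (pinnedColorings G L Λ η).card := by
  have hpin : (Finset.univ.filter fun τ : V → C => ∀ u, u ∉ Λᶜ → τ u = η u).filter
      (isListColoring G L) = pinnedColorings G L Λ η := by
    ext τ; simp [pinnedColorings, and_comm]
  have hpinP : ((Finset.univ.filter P).filter fun τ : V → C => ∀ u, u ∉ Λᶜ → τ u = η u).filter
      (isListColoring G L) = (pinnedColorings G L Λ η).filter P := by
    ext τ
    simp only [pinnedColorings, Finset.mem_filter, Finset.mem_univ, Finset.mem_compl,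
      Decidable.not_not, true_and]
    tauto
  simp only [condD]
  rw [← Finset.sum_filter, ← Finset.sum_div, sum_colMu, sum_colMu, hpin, hpinP]
  set N := (Finset.univ.filter (isListColoring G L)).card
  rcases Nat.eq_zero_or_pos N with hN | hN
  · have : (pinnedColorings G L Λ η).card = 0 :=
      Nat.eq_zero_of_le_zero (hN ▸ Finset.card_le_card (Finset.monotone_filter_right _
        fun _ _ h => h.1))
    simp [this]
  · exact div_div_div_cancel_right₀ (by positivity) _ _

lemma card_pinnedColorings_le [DecidableEq C] (hL : ∀ u, gdeg G u < (L u).card)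
    {Λ : Finset V} {η : V → C} {v : V} {c : C} (hv : v ∉ Λ) (hc : c ∈ L v)
    (hη : ∀ u ∈ Λ, G.Adj v u → η u ≠ c) :
    (pinnedColorings G L Λ η).card ≤
      2 ^ gdeg G v * (L v).card * ((pinnedColorings G L Λ η).filter (· v = c)).card := by
  have hrecolor : ∀ σ ∈ pinnedColorings G L Λ η,
      ∃ τ ∈ (pinnedColorings G L Λ η).filter (· v = c),
        ∀ u ≠ v, ¬(G.Adj v u ∧ σ u = c) → τ u = σ u := by
    intro σ hσ
    obtain ⟨hσL, hση⟩ := (Finset.mem_filter.1 hσ).2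
    obtain ⟨τ, hτ, hτv, hτσ⟩ := exists_recolor hL hc hσL
    refine ⟨τ, Finset.mem_filter.2 ⟨Finset.mem_filter.2 ⟨Finset.mem_univ _, hτ, fun u hu => ?_⟩,
      hτv⟩, hτσ⟩
    have huv : u ≠ v := fun h => hv (h ▸ hu)
    rw [hτσ u huv fun h => hη u hu h.1 (hση u hu ▸ h.2), hση u hu]
  choose! f hfA hf using hrecolor
  exact card_le_two_pow_gdeg_mul_card hfA (fun σ hσ => (Finset.mem_filter.1 hσ).2.1.1 v) hf

end

theorem list_coloring_marginal_lower_bound_general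
    {V : Type*} [Fintype V] [DecidableEq V] {C : Type*} [Fintype C] [DecidableEq C]
    (G : SimpleGraph V) (L : V → Finset C) (Δ q : ℕ)
    (hdeg : ∀ v, gdeg G v ≤ Δ)
    (hL : ∀ v, gdeg G v + 2 ≤ (L v).card ∧ (L v).card ≤ q)
    (Λ : Finset V) (η : V → C)
    (v : V) (hv : v ∉ Λ) (c : C)
    (hfeas : ∃ σ : V → C, isListColoring G L σ ∧ (∀ u ∈ Λ, σ u = η u) ∧ σ v = c) :
    1 / ((2 : ℝ) ^ Δ * q) ≤
      ∑ τ ∈ Finset.univ.filter (fun τ : V → C => τ v = c),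
        condD (colMu G L) Λᶜ η τ := by
  obtain ⟨σ₀, hσ₀, hσ₀η, hσ₀v⟩ := hfeas
  have hc : c ∈ L v := hσ₀v ▸ hσ₀.1 v
  have hη : ∀ u ∈ Λ, G.Adj v u → η u ≠ c := fun u hu hvu h =>
    hσ₀.2 v u hvu (by rw [hσ₀v, hσ₀η u hu, h])
  have hpos : 0 < (pinnedColorings G L Λ η).card :=
    Finset.card_pos.2 ⟨σ₀, Finset.mem_filter.2 ⟨Finset.mem_univ _, hσ₀, hσ₀η⟩⟩
  have hq : 0 < q := (Finset.card_pos.2 ⟨c, hc⟩).trans_le (hL v).2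
  have hcount : ((pinnedColorings G L Λ η).card : ℝ) ≤
      2 ^ Δ * q * ((pinnedColorings G L Λ η).filter (· v = c)).card := by
    have hlists : ∀ u, gdeg G u < (L u).card := fun u => by have := (hL u).1; omega
    exact_mod_cast (card_pinnedColorings_le hlists hv hc hη).trans <| Nat.mul_le_mul_right _ <|
      Nat.mul_le_mul (Nat.pow_le_pow_right two_pos (hdeg v)) (hL v).2
  rw [sum_condD_colMu, div_le_div_iff₀ (by positivity) (by exact_mod_cast hpos)]
  linarith

/-- **Marginal lower bound for list colorings.** If `Δ ≥ 3` bounds the maximum degree and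
`deg(v) + 2 ≤ |L_v| ≤ q` for all `v`, then for any pinning `η` on `Λ`, any `v ∉ Λ` and
any color `c ∈ L_v` such that `η` extends to a full list coloring assigning `c` to `v`,
the conditional marginal satisfies `μ^η_v(c) ≥ 1/(2^Δ q)`. -/
theorem list_coloring_marginal_lower_bound
    {V : Type*} [Fintype V] [DecidableEq V] {C : Type*} [Fintype C] [DecidableEq C]
    (G : SimpleGraph V) (L : V → Finset C) (Δ q : ℕ) (hΔ : 3 ≤ Δ)
    (hdeg : ∀ v, gdeg G v ≤ Δ)
    (hL : ∀ v, gdeg G v + 2 ≤ (L v).card ∧ (L v).card ≤ q)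
    (Λ : Finset V) (η : V → C)
    (v : V) (hv : v ∉ Λ) (c : C) (hc : c ∈ L v)
    (hfeas : ∃ σ : V → C, isListColoring G L σ ∧ (∀ u ∈ Λ, σ u = η u) ∧ σ v = c) :
    1 / ((2 : ℝ) ^ Δ * q) ≤
      ∑ τ ∈ Finset.univ.filter (fun τ : V → C => τ v = c),
        condD (colMu G L) Λᶜ η τ :=
  list_coloring_marginal_lower_bound_general G L Δ q hdeg hL Λ η v hv c hfeas

end
end

section
/- Consider list colorings on a finite simple graph G = (V,E) of maximum degree Δ ≥ 3, where each vertex v has a color list L_v with deg_G(v) + 2 ≤ |L_v| ≤ q. Let t ≥ 1 and let S ⊆ U ⊆ V with |S| ≤ t. Then for every pinning η on V∖U, the conditional distribution μ^η_U over list colorings of U satisfies {B_U(S,1), U∖S}-factorization of variance with constant C = 2(2^Δ q)^t; that is, for every real-valued function f of the coloring of U, Var_{μ^η_U} f ≤ 2(2^Δ q)^t · (E[Var_{B_U(S,1)} f] + E[Var_{U∖S} f]), where the conditional variances are taken under μ^η_U. -/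
/-!
Let `Ω` be the colourings extending `η`, `K = (2^Δ q)^t`, and for `x ∈ Ω` let `A x` be the
colourings of `Ω` agreeing with `x` off `B_U(S,1)` and `B x` those agreeing with `x` off `U ∖ S`.

Combinatorial input: for `x ≠ y` the set `A x ∩ B y` consists of the colourings extending `x`
off the ball and `y` on `S`; it is nonempty by greedy extension (lists are longer than degrees),
and `|A x| ≤ K |A x ∩ B y|`. Pinning one more vertex `v` to a colour `c` costs at most a factor
`2^Δ q`, because giving `v` the colour `c` and moving its neighbours of colour `c` to fresh colours
is injective once one remembers the old colour of `v` and which neighbours were moved.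

Analytic input: route each pair `x, y` through every `z ∈ A x ∩ B y`, using
`(f x - f y)² ≤ 2 (f x - f z)² + 2 (f z - f y)²`; averaging over `z`, `x`, `y` turns the overlap
bound into `Var f ≤ 2K (E Var_A f + E Var_B f)`.
-/


open scoped BigOperators Classical

noncomputable section

variable {V : Type*} [Fintype V] [DecidableEq V] {C : Type*} [Fintype C] [DecidableEq C]

/-- `B_U(S, 1) = {v ∈ U : dist_G(v, S) ≤ 1}`. -/
def ballU1 {V : Type*} [Fintype V] [DecidableEq V] (G : SimpleGraph V)
    (U S : Finset V) : Finset V :=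
  U.filter (fun v => ∃ s ∈ S, ∃ w : G.Walk v s, w.length ≤ 1)

set_option linter.unusedSectionVars false

open Finset

section UniformDensity

variable {α : Type*} [Fintype α]

def uniformDensity (A : Finset α) (x : α) : ℝ := if x ∈ A then (#A : ℝ)⁻¹ else 0

def meanSqDist (A : Finset α) (f : α → ℝ) (x : α) : ℝ := (∑ y ∈ A, (f x - f y) ^ 2) / #A

lemma pmean_uniformDensity (A : Finset α) (g : α → ℝ) :
    pmean (uniformDensity A) g = (∑ x ∈ A, g x) / #A := by
  simp only [pmean, uniformDensity, ite_mul, zero_mul, sum_ite_mem, univ_inter, ← mul_sum,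
    div_eq_inv_mul]

lemma pmean_uniformDensity_congr (A : Finset α) {g g' : α → ℝ} (h : ∀ x ∈ A, g x = g' x) :
    pmean (uniformDensity A) g = pmean (uniformDensity A) g' := by
  simp only [pmean_uniformDensity, sum_congr rfl h]

lemma pvar_uniformDensity (A : Finset α) (f : α → ℝ) :
    pvar (uniformDensity A) f = (∑ x ∈ A, meanSqDist A f x) / (2 * #A) := by
  rcases A.eq_empty_or_nonempty with rfl | hA
  · simp [pvar, pmean_uniformDensity]
  have hn : (#A : ℝ) ≠ 0 := by positivity
  have hpair : ∑ x ∈ A, ∑ y ∈ A, (f x - f y) ^ 2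
      = 2 * #A * ∑ x ∈ A, f x ^ 2 - 2 * (∑ x ∈ A, f x) ^ 2 := by
    simp only [sub_sq, sum_add_distrib, sum_sub_distrib, sum_const, nsmul_eq_mul, ← mul_sum,
      ← sum_mul, mul_assoc]
    ring
  have hcentered : ∑ x ∈ A, (f x - (∑ y ∈ A, f y) / #A) ^ 2
      = ∑ x ∈ A, f x ^ 2 - (∑ x ∈ A, f x) ^ 2 / #A := by
    simp only [sub_sq, sum_add_distrib, sum_sub_distrib, sum_const, nsmul_eq_mul, ← sum_mul,
      mul_assoc, ← mul_sum]
    field_simp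
    ring
  rw [pvar, pmean_uniformDensity, pmean_uniformDensity, hcentered]
  simp only [meanSqDist, ← sum_div, hpair]
  field_simp

end UniformDensity

section FiberAverage

variable {α β : Type*} [DecidableEq β]

lemma sum_fiber_average (Ω : Finset α) (p : α → β) (h : α → ℝ) :
    ∑ x ∈ Ω, (∑ z ∈ Ω with p z = p x, h z) / #{z ∈ Ω | p z = p x} = ∑ x ∈ Ω, h x := by
  rw [sum_comp (fun b => (∑ z ∈ Ω with p z = b, h z) / #{z ∈ Ω | p z = b}) p,
    ← sum_fiberwise_of_maps_to (fun x hx => mem_image_of_mem p hx) h]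
  refine sum_congr rfl fun b hb => ?_
  obtain ⟨x, hx, rfl⟩ := mem_image.1 hb
  have hcard : (#{z ∈ Ω | p z = p x} : ℝ) ≠ 0 :=
    Nat.cast_ne_zero.2 (card_ne_zero_of_mem (mem_filter.2 ⟨hx, rfl⟩))
  rw [nsmul_eq_mul, mul_div_cancel₀ _ hcard]

lemma sum_pvar_uniformDensity_fiber [Fintype α] (Ω : Finset α) (p : α → β) (f : α → ℝ) :
    ∑ x ∈ Ω, pvar (uniformDensity {z ∈ Ω | p z = p x}) f
      = (∑ x ∈ Ω, meanSqDist {z ∈ Ω | p z = p x} f x) / 2 := by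
  conv_rhs => rw [← sum_fiber_average Ω p, sum_div]
  refine sum_congr rfl fun x _ => ?_
  have hfiber : ∀ y ∈ {z ∈ Ω | p z = p x}, {z ∈ Ω | p z = p y} = {z ∈ Ω | p z = p x} :=
    fun y hy => by rw [(mem_filter.1 hy).2]
  have hinner : ∑ y ∈ Ω with p y = p x, meanSqDist {z ∈ Ω | p z = p y} f y
      = ∑ y ∈ Ω with p y = p x, meanSqDist {z ∈ Ω | p z = p x} f y :=
    sum_congr rfl fun y hy => by rw [hfiber y hy]
  rw [pvar_uniformDensity, hinner]
  field_simp

end FiberAverage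

lemma sq_sub_mul_card_le {α : Type*} (a b : ℝ) (g : α → ℝ) (I : Finset α) :
    (a - b) ^ 2 * #I ≤ 2 * ∑ z ∈ I, ((a - g z) ^ 2 + (g z - b) ^ 2) := by
  rw [mul_comm, ← nsmul_eq_mul, ← sum_const, mul_sum]
  exact sum_le_sum fun z _ => by nlinarith [sq_nonneg (a + b - 2 * g z)]

section TwoBlock

variable {α β γ : Type*} [DecidableEq β] [DecidableEq γ]

-- The diagonal `x = y` is exempt: it contributes nothing to the variance, and a one-point `Ω`
-- then satisfies the condition for every `K`.
def FiberOverlap (Ω : Finset α) (p : α → β) (r : α → γ) (K : ℝ) : Prop :=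
  ∀ x ∈ Ω, ∀ y ∈ Ω, x ≠ y → (#{z ∈ Ω | p z = p x} : ℝ) ≤ K * #{z ∈ Ω | p z = p x ∧ r z = r y}

variable {Ω : Finset α} {p : α → β} {r : α → γ} {K : ℝ}

lemma sq_sub_mul_card_fiber_le (hK : 0 ≤ K)
    (hoverlap : FiberOverlap Ω p r K)
    (f : α → ℝ) {x y : α} (hx : x ∈ Ω) (hy : y ∈ Ω) :
    (f x - f y) ^ 2 * #{z ∈ Ω | p z = p x} ≤ 2 * K *
      (∑ z ∈ Ω with p z = p x, (f x - f z) ^ 2 +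
        ∑ z ∈ Ω with p z = p x ∧ r z = r y, (f z - f y) ^ 2) := by
  have hnonneg : ∀ s : Finset α, ∀ g : α → ℝ, 0 ≤ ∑ z ∈ s, g z ^ 2 :=
    fun s g => sum_nonneg fun z _ => sq_nonneg _
  obtain rfl | hxy := eq_or_ne x y
  · simpa using mul_nonneg (mul_nonneg zero_le_two hK) (add_nonneg (hnonneg _ _) (hnonneg _ _))
  have hsub : {z ∈ Ω | p z = p x ∧ r z = r y} ⊆ {z ∈ Ω | p z = p x} :=
    monotone_filter_right _ fun z _ hz => hz.1
  calc (f x - f y) ^ 2 * #{z ∈ Ω | p z = p x}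
      ≤ K * ((f x - f y) ^ 2 * #{z ∈ Ω | p z = p x ∧ r z = r y}) := by
        rw [mul_left_comm]
        exact mul_le_mul_of_nonneg_left (hoverlap x hx y hy hxy) (sq_nonneg _)
    _ ≤ K * (2 * ∑ z ∈ Ω with p z = p x ∧ r z = r y, ((f x - f z) ^ 2 + (f z - f y) ^ 2)) :=
        mul_le_mul_of_nonneg_left (sq_sub_mul_card_le _ _ f _) hK
    _ ≤ 2 * K * (∑ z ∈ Ω with p z = p x, (f x - f z) ^ 2 +
        ∑ z ∈ Ω with p z = p x ∧ r z = r y, (f z - f y) ^ 2) := by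
        rw [sum_add_distrib, ← mul_assoc, mul_comm K]
        gcongr

lemma sum_sum_fiber_inter_eq (f : α → ℝ) (x : α) :
    ∑ y ∈ Ω, ∑ z ∈ Ω with p z = p x ∧ r z = r y, (f z - f y) ^ 2
      = ∑ z ∈ Ω with p z = p x, #{y ∈ Ω | r y = r z} * meanSqDist {y ∈ Ω | r y = r z} f z := by
  rw [sum_comm' (t' := {z ∈ Ω | p z = p x}) (s' := fun z => {y ∈ Ω | r y = r z})]
  · refine sum_congr rfl fun z hz => ?_
    have : (#{y ∈ Ω | r y = r z} : ℝ) ≠ 0 :=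
      Nat.cast_ne_zero.2 (card_ne_zero_of_mem (mem_filter.2 ⟨(mem_filter.1 hz).1, rfl⟩))
    rw [meanSqDist, mul_div_cancel₀ _ this]
  · intro y z
    simp only [mem_filter, eq_comm (a := r y)]
    tauto

lemma meanSqDist_le_of_overlap (hK : 0 ≤ K)
    (hoverlap : FiberOverlap Ω p r K)
    (f : α → ℝ) {x : α} (hx : x ∈ Ω) :
    meanSqDist Ω f x ≤ 2 * K * (meanSqDist {z ∈ Ω | p z = p x} f x +
      (∑ z ∈ Ω with p z = p x, meanSqDist {y ∈ Ω | r y = r z} f z) / #{z ∈ Ω | p z = p x}) := by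
  have hn : (0 : ℝ) < #Ω := by exact_mod_cast card_pos.2 ⟨x, hx⟩
  have hxA : x ∈ {z ∈ Ω | p z = p x} := mem_filter.2 ⟨hx, rfl⟩
  have hnA : (0 : ℝ) < #{z ∈ Ω | p z = p x} := by exact_mod_cast card_pos.2 ⟨x, hxA⟩
  have hsum := sum_le_sum fun y hy => sq_sub_mul_card_fiber_le hK hoverlap f hx hy
  rw [← sum_mul, ← mul_sum, sum_add_distrib, sum_const, nsmul_eq_mul,
    sum_sum_fiber_inter_eq] at hsum
  have hfiber_le : ∑ z ∈ Ω with p z = p x,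
        #{y ∈ Ω | r y = r z} * meanSqDist {y ∈ Ω | r y = r z} f z
      ≤ #Ω * ∑ z ∈ Ω with p z = p x, meanSqDist {y ∈ Ω | r y = r z} f z := by
    rw [mul_sum]
    refine sum_le_sum fun z _ => mul_le_mul_of_nonneg_right ?_ ?_
    · exact_mod_cast card_filter_le _ _
    · exact div_nonneg (sum_nonneg fun _ _ => sq_nonneg _) (Nat.cast_nonneg _)
  rw [meanSqDist, meanSqDist, div_le_iff₀ hn, ← add_div, mul_div_assoc', div_mul_eq_mul_div,
    le_div_iff₀ hnA]
  nlinarith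

variable [Fintype α]

theorem pvar_uniformDensity_le_of_overlap (hK : 0 ≤ K)
    (hoverlap : FiberOverlap Ω p r K)
    (f : α → ℝ) :
    pvar (uniformDensity Ω) f ≤ 2 * K *
      (pmean (uniformDensity Ω) (fun x => pvar (uniformDensity {z ∈ Ω | p z = p x}) f) +
        pmean (uniformDensity Ω) (fun x => pvar (uniformDensity {z ∈ Ω | r z = r x}) f)) := by
  have hsum : ∑ x ∈ Ω, meanSqDist Ω f x ≤ 2 * K *
      (∑ x ∈ Ω, meanSqDist {z ∈ Ω | p z = p x} f x +
        ∑ x ∈ Ω, meanSqDist {z ∈ Ω | r z = r x} f x) := by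
    calc ∑ x ∈ Ω, meanSqDist Ω f x
        ≤ ∑ x ∈ Ω, 2 * K * (meanSqDist {z ∈ Ω | p z = p x} f x +
          (∑ z ∈ Ω with p z = p x, meanSqDist {y ∈ Ω | r y = r z} f z)
            / #{z ∈ Ω | p z = p x}) :=
          sum_le_sum fun x hx => meanSqDist_le_of_overlap hK hoverlap f hx
      _ = _ := by rw [← mul_sum, sum_add_distrib, sum_fiber_average]
  rw [pvar_uniformDensity, pmean_uniformDensity, pmean_uniformDensity,
    sum_pvar_uniformDensity_fiber, sum_pvar_uniformDensity_fiber]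
  calc (∑ x ∈ Ω, meanSqDist Ω f x) / (2 * #Ω)
      ≤ 2 * K * (∑ x ∈ Ω, meanSqDist {z ∈ Ω | p z = p x} f x +
          ∑ x ∈ Ω, meanSqDist {z ∈ Ω | r z = r x} f x) / (2 * #Ω) := by
        gcongr
    _ = _ := by ring

end TwoBlock

section ListColoring

variable {G : SimpleGraph V} {L : V → Finset C} {Λ : Finset V} {ξ σ : V → C} {v : V} {c : C}
  {Δ q : ℕ}

variable (G L) in
def coloringsAgreeingOn (Λ : Finset V) (ξ : V → C) : Finset (V → C) :=
  {σ | isListColoring G L σ ∧ ∀ v ∈ Λ, σ v = ξ v}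

lemma mem_coloringsAgreeingOn :
    σ ∈ coloringsAgreeingOn G L Λ ξ ↔ isListColoring G L σ ∧ ∀ v ∈ Λ, σ v = ξ v := by
  simp [coloringsAgreeingOn]

lemma coloringsAgreeingOn_anti {Λ' : Finset V} (h : Λ ⊆ Λ') (ξ : V → C) :
    coloringsAgreeingOn G L Λ' ξ ⊆ coloringsAgreeingOn G L Λ ξ := fun σ hσ => by
  rw [mem_coloringsAgreeingOn] at hσ ⊢
  exact ⟨hσ.1, fun v hv => hσ.2 v (h hv)⟩

lemma condD_colMu (B : Finset V) (σ : V → C) :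
    condD (colMu G L) B σ = uniformDensity (coloringsAgreeingOn G L Bᶜ σ) := by
  have hmass : ∑ τ ∈ univ.filter (fun τ : V → C => ∀ v, v ∉ B → τ v = σ v), colMu G L τ
      = #(coloringsAgreeingOn G L Bᶜ σ) / #{τ : V → C | isListColoring G L τ} := by
    unfold colMu
    rw [← sum_div, sum_boole, filter_filter]
    congr 3
    ext τ
    simp [mem_coloringsAgreeingOn, and_comm]
  funext τ
  unfold condD uniformDensity
  rw [hmass]
  unfold colMu
  by_cases hτ : τ ∈ coloringsAgreeingOn G L Bᶜ σ
  · obtain ⟨hcol, hagree⟩ := mem_coloringsAgreeingOn.1 hτ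
    have hN : (#{τ : V → C | isListColoring G L τ} : ℝ) ≠ 0 :=
      Nat.cast_ne_zero.2 (card_ne_zero_of_mem (mem_filter.2 ⟨mem_univ τ, hcol⟩))
    rw [if_pos hτ, if_pos fun v hv => hagree v (mem_compl.2 hv), if_pos hcol]
    field_simp
  · rw [if_neg hτ]
    split_ifs with hagree hcol
    · exact absurd (mem_coloringsAgreeingOn.2 ⟨hcol, fun v hv => hagree v (mem_compl.1 hv)⟩) hτ
    · simp
    · rfl

variable (G L) in
def IsListColoringOn (Λ : Finset V) (ξ : V → C) : Prop :=
  (∀ v ∈ Λ, ξ v ∈ L v) ∧ ∀ a ∈ Λ, ∀ b ∈ Λ, G.Adj a b → ξ a ≠ ξ b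

lemma IsListColoringOn.exists_update {v : V} (hL : gdeg G v < #(L v))
    (h : IsListColoringOn G L Λ ξ) :
    ∃ c, IsListColoringOn G L (insert v Λ) (Function.update ξ v c) := by
  obtain ⟨c, hc⟩ : (L v \ ({u | G.Adj v u} : Finset V).image ξ).Nonempty := by
    rw [← card_pos]
    have := le_card_sdiff (({u | G.Adj v u} : Finset V).image ξ) (L v)
    have := card_image_le (s := ({u | G.Adj v u} : Finset V)) (f := ξ)
    unfold gdeg at hL
    omega
  rw [mem_sdiff, mem_image] at hc
  have hfresh : ∀ b, G.Adj v b → c ≠ ξ b := fun b hb hcb =>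
    hc.2 ⟨b, mem_filter.2 ⟨mem_univ b, hb⟩, hcb.symm⟩
  refine ⟨c, fun u hu => ?_, fun a ha b hb hab => ?_⟩
  · rcases eq_or_ne u v with rfl | huv
    · simpa using hc.1
    · rw [Function.update_of_ne huv]
      exact h.1 u (mem_of_mem_insert_of_ne hu huv)
  · simp only [Function.update_apply]
    split_ifs with hav hbv hbv
    · exact absurd (hav ▸ hbv ▸ hab) (G.irrefl)
    · exact hfresh b (hav ▸ hab)
    · exact (hfresh a (hbv ▸ hab.symm)).symm
    · exact h.2 a (mem_of_mem_insert_of_ne ha hav) b (mem_of_mem_insert_of_ne hb hbv) hab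

lemma IsListColoringOn.coloringsAgreeingOn_nonempty (hL : ∀ v, gdeg G v < #(L v))
    (h : IsListColoringOn G L Λ ξ) : (coloringsAgreeingOn G L Λ ξ).Nonempty := by
  suffices ∀ s : Finset V, ∀ Λ ξ, Λᶜ ⊆ s → IsListColoringOn G L Λ ξ →
      (coloringsAgreeingOn G L Λ ξ).Nonempty from this _ Λ ξ subset_rfl h
  intro s
  induction s using Finset.induction_on with
  | empty =>
    intro Λ ξ hs h
    have hΛ : ∀ v, v ∈ Λ := fun v => by simpa using hs (x := v)
    exact ⟨ξ, mem_coloringsAgreeingOn.2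
      ⟨⟨fun v => h.1 v (hΛ v), fun a b hab => h.2 a (hΛ a) b (hΛ b) hab⟩, fun _ _ => rfl⟩⟩
  | insert a s _ ih =>
    intro Λ ξ hs h
    by_cases haΛ : a ∈ Λ
    · refine ih Λ ξ (fun v hv => ?_) h
      exact mem_of_mem_insert_of_ne (hs hv) fun hva => mem_compl.1 hv (hva ▸ haΛ)
    obtain ⟨c, hc⟩ := h.exists_update (hL a)
    have hs' : (insert a Λ)ᶜ ⊆ s := fun v hv => by
      rw [mem_compl, mem_insert, not_or] at hv
      exact mem_of_mem_insert_of_ne (hs (mem_compl.2 hv.2)) hv.1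
    obtain ⟨σ, hσ⟩ := ih (insert a Λ) _ hs' hc
    refine ⟨σ, mem_coloringsAgreeingOn.2 ⟨(mem_coloringsAgreeingOn.1 hσ).1, fun v hv => ?_⟩⟩
    rw [(mem_coloringsAgreeingOn.1 hσ).2 v (mem_insert_of_mem hv),
      Function.update_of_ne (ne_of_mem_of_not_mem hv haΛ)]

variable (G L) in
def freshColor (σ : V → C) (c : C) (u : V) : C :=
  if h : (L u \ insert c (({w | G.Adj u w} : Finset V).image σ)).Nonempty then h.choose else c

lemma freshColor_spec {u : V} (hL : gdeg G u + 2 ≤ #(L u)) :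
    freshColor G L σ c u ∈ L u ∧ freshColor G L σ c u ≠ c ∧
      ∀ w, G.Adj u w → freshColor G L σ c u ≠ σ w := by
  have hne : (L u \ insert c (({w | G.Adj u w} : Finset V).image σ)).Nonempty := by
    rw [← card_pos]
    have := le_card_sdiff (insert c (({w | G.Adj u w} : Finset V).image σ)) (L u)
    have := card_insert_le c (({w | G.Adj u w} : Finset V).image σ)
    have := card_image_le (s := ({w | G.Adj u w} : Finset V)) (f := σ)
    unfold gdeg at hL
    omega
  have hmem := hne.choose_spec
  rw [mem_sdiff, mem_insert, not_or, mem_image] at hmem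
  refine ⟨?_, ?_, fun w hw hcw => ?_⟩ <;> rw [freshColor, dif_pos hne] at *
  · exact hmem.1
  · exact hmem.2.1
  · exact hmem.2.2 ⟨w, mem_filter.2 ⟨mem_univ w, hw⟩, hcw.symm⟩

variable (G) in
def nbrsColored (σ : V → C) (v : V) (c : C) : Finset V := {u | G.Adj v u ∧ σ u = c}

variable (G L) in
def recolorAt (σ : V → C) (v : V) (c : C) (w : V) : C :=
  if w = v then c else if w ∈ nbrsColored G σ v c then freshColor G L σ c w else σ w

lemma isListColoring_recolorAt (hL : ∀ u, gdeg G u + 2 ≤ #(L u)) (hσ : isListColoring G L σ)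
    (hc : c ∈ L v) : isListColoring G L (recolorAt G L σ v c) := by
  have hfresh := fun u => freshColor_spec (σ := σ) (c := c) (hL u)
  refine ⟨fun w => ?_, fun a b hab => ?_⟩
  · unfold recolorAt
    split_ifs with hwv
    exacts [hwv ▸ hc, (hfresh w).1, hσ.1 w]
  · simp only [recolorAt, nbrsColored, mem_filter, mem_univ, true_and]
    have := hσ.2 a b hab
    have := G.ne_of_adj hab
    -- two adjacent recoloured vertices would both have had colour `c` under `σ`
    split_ifs <;> grind [SimpleGraph.Adj.symm]

lemma recolorAt_mem_coloringsAgreeingOn (hL : ∀ u, gdeg G u + 2 ≤ #(L u))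
    (hσ : σ ∈ coloringsAgreeingOn G L Λ ξ)
    (hne : (coloringsAgreeingOn G L (insert v Λ) ξ).Nonempty) :
    recolorAt G L σ v (ξ v) ∈ coloringsAgreeingOn G L (insert v Λ) ξ := by
  obtain ⟨ρ, hρ⟩ := hne
  rw [mem_coloringsAgreeingOn] at hσ hρ ⊢
  have hρv : ρ v = ξ v := hρ.2 v (mem_insert_self v Λ)
  refine ⟨isListColoring_recolorAt hL hσ.1 (hρv ▸ hρ.1.1 v), fun w hw => ?_⟩
  rcases eq_or_ne w v with rfl | hwv
  · simp [recolorAt]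
  have hwΛ := mem_of_mem_insert_of_ne hw hwv
  -- `ρ` shows that no vertex of `Λ` adjacent to `v` has colour `ξ v`
  have hw_not : w ∉ nbrsColored G σ v (ξ v) := fun h => by
    obtain ⟨hadj, hσw⟩ := (mem_filter.1 h).2
    exact hρ.1.2 v w hadj (by rw [hρv, hρ.2 w hw, ← hσ.2 w hwΛ, hσw])
  simp only [recolorAt, if_neg hwv, if_neg hw_not, hσ.2 w hwΛ]

lemma eq_of_recolorAt_eq {σ' : V → C}
    (h : recolorAt G L σ v c = recolorAt G L σ' v c)
    (hnbrs : nbrsColored G σ v c = nbrsColored G σ' v c) (hv : σ v = σ' v) : σ = σ' := by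
  have hrecover : ∀ τ : V → C, ∀ w, τ w =
      if w = v then τ v else if w ∈ nbrsColored G τ v c then c else recolorAt G L τ v c w := by
    intro τ w
    unfold recolorAt
    split_ifs with hwv hw
    · rw [hwv]
    · exact (mem_filter.1 hw).2.2
    · rfl
  funext w
  rw [hrecover σ, hrecover σ', h, hnbrs, hv]

lemma card_coloringsAgreeingOn_le_insert (hdeg : ∀ u, gdeg G u ≤ Δ)
    (hL : ∀ u, gdeg G u + 2 ≤ #(L u)) (hq : ∀ u, #(L u) ≤ q)
    (hne : (coloringsAgreeingOn G L (insert v Λ) ξ).Nonempty) :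
    #(coloringsAgreeingOn G L Λ ξ) ≤ 2 ^ Δ * q * #(coloringsAgreeingOn G L (insert v Λ) ξ) := by
  let encode : (V → C) → (V → C) × Finset V × C := fun σ =>
    (recolorAt G L σ v (ξ v), nbrsColored G σ v (ξ v), σ v)
  let codes : Finset ((V → C) × Finset V × C) :=
    coloringsAgreeingOn G L (insert v Λ) ξ ×ˢ ({u | G.Adj v u} : Finset V).powerset ×ˢ L v
  have hmaps : Set.MapsTo encode (coloringsAgreeingOn G L Λ ξ) codes :=
    fun σ hσ => by
      refine mem_product.2 ⟨recolorAt_mem_coloringsAgreeingOn hL hσ hne, mem_product.2 ⟨?_, ?_⟩⟩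
      · exact mem_powerset.2 (monotone_filter_right _ fun u _ hu => hu.1)
      · exact (mem_coloringsAgreeingOn.1 hσ).1.1 v
  have hinj : Set.InjOn encode (coloringsAgreeingOn G L Λ ξ) := fun σ _ σ' _ h => by
    simp only [encode, Prod.mk.injEq] at h
    exact eq_of_recolorAt_eq h.1 h.2.1 h.2.2
  calc #(coloringsAgreeingOn G L Λ ξ)
      ≤ #(coloringsAgreeingOn G L (insert v Λ) ξ) * (2 ^ gdeg G v * #(L v)) := by
        simpa [codes, card_product, card_powerset, gdeg] using card_le_card_of_injOn encode hmaps hinj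
    _ ≤ #(coloringsAgreeingOn G L (insert v Λ) ξ) * (2 ^ Δ * q) := by
        gcongr
        exacts [one_le_two, hdeg v, hq v]
    _ = _ := mul_comm _ _

lemma card_coloringsAgreeingOn_le_union (hdeg : ∀ u, gdeg G u ≤ Δ)
    (hL : ∀ u, gdeg G u + 2 ≤ #(L u)) (hq : ∀ u, #(L u) ≤ q) (S : Finset V) :
    ∀ Λ : Finset V, (coloringsAgreeingOn G L (Λ ∪ S) ξ).Nonempty →
      #(coloringsAgreeingOn G L Λ ξ) ≤ (2 ^ Δ * q) ^ #S * #(coloringsAgreeingOn G L (Λ ∪ S) ξ) := by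
  induction S using Finset.induction_on with
  | empty => simp
  | insert a S haS ih =>
    intro Λ hne
    have hunion : insert a Λ ∪ S = Λ ∪ insert a S := by rw [insert_union, union_insert]
    have hne' : (coloringsAgreeingOn G L (insert a Λ ∪ S) ξ).Nonempty := hunion ▸ hne
    calc #(coloringsAgreeingOn G L Λ ξ)
        ≤ 2 ^ Δ * q * #(coloringsAgreeingOn G L (insert a Λ) ξ) :=
          card_coloringsAgreeingOn_le_insert hdeg hL hq
            (hne'.mono (coloringsAgreeingOn_anti subset_union_left ξ))
      _ ≤ 2 ^ Δ * q * ((2 ^ Δ * q) ^ #S * #(coloringsAgreeingOn G L (insert a Λ ∪ S) ξ)) := by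
          gcongr
          exact ih _ hne'
      _ = (2 ^ Δ * q) ^ #(insert a S) * #(coloringsAgreeingOn G L (Λ ∪ insert a S) ξ) := by
          rw [card_insert_of_notMem haS, hunion, pow_succ]
          ring

end ListColoring

section Ball

variable {G : SimpleGraph V} {U S : Finset V}

lemma ballU1_subset : ballU1 G U S ⊆ U := filter_subset _ _

lemma subset_ballU1 (hSU : S ⊆ U) : S ⊆ ballU1 G U S := fun s hs =>
  mem_filter.2 ⟨hSU hs, s, hs, .nil, by simp⟩

lemma mem_ballU1_of_adj {a s : V} (ha : a ∈ U) (hs : s ∈ S) (hadj : G.Adj a s) :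
    a ∈ ballU1 G U S :=
  mem_filter.2 ⟨ha, s, hs, hadj.toWalk, by simp⟩

end Ball

lemma Finset.restrict_eq_restrict_iff {ι : Type*} {π : ι → Type*} {s : Finset ι}
    {f g : ∀ i, π i} : s.restrict f = s.restrict g ↔ ∀ i ∈ s, f i = g i := by
  simp [funext_iff]

section Fibers

variable {G : SimpleGraph V} {L : V → Finset C} {U S : Finset V} {η σ x y : V → C}

lemma filter_restrict_eq_coloringsAgreeingOn {B : Finset V} (hBU : B ⊆ U)
    (hσ : σ ∈ coloringsAgreeingOn G L Uᶜ η) :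
    {τ ∈ coloringsAgreeingOn G L Uᶜ η | Bᶜ.restrict τ = Bᶜ.restrict σ}
      = coloringsAgreeingOn G L Bᶜ σ := by
  rw [mem_coloringsAgreeingOn] at hσ
  ext τ
  simp only [mem_filter, mem_coloringsAgreeingOn, restrict_eq_restrict_iff, mem_compl]
  constructor
  · exact fun h => ⟨h.1.1, h.2⟩
  · refine fun h => ⟨⟨h.1, fun v hv => ?_⟩, h.2⟩
    rw [h.2 v fun hvB => hv (hBU hvB), hσ.2 v (mem_compl.2 hv)]

lemma filter_restrict_and_restrict_eq_coloringsAgreeingOn (hSU : S ⊆ U)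
    (hx : x ∈ coloringsAgreeingOn G L Uᶜ η) (hy : y ∈ coloringsAgreeingOn G L Uᶜ η) :
    {z ∈ coloringsAgreeingOn G L Uᶜ η | (ballU1 G U S)ᶜ.restrict z = (ballU1 G U S)ᶜ.restrict x ∧
        (U \ S)ᶜ.restrict z = (U \ S)ᶜ.restrict y}
      = coloringsAgreeingOn G L ((ballU1 G U S)ᶜ ∪ S) (S.piecewise y x) := by
  have hSB : S ⊆ ballU1 G U S := subset_ballU1 hSU
  have hBU : ballU1 G U S ⊆ U := ballU1_subset
  rw [mem_coloringsAgreeingOn] at hx hy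
  have hξS : ∀ v ∈ S, S.piecewise y x v = y v := fun v hv => piecewise_eq_of_mem _ _ _ hv
  have hξ : ∀ v ∉ S, S.piecewise y x v = x v := fun v hv => piecewise_eq_of_notMem _ _ _ hv
  ext z
  simp only [mem_filter, mem_coloringsAgreeingOn, restrict_eq_restrict_iff, mem_compl, mem_union,
    mem_sdiff, not_and_not_right]
  constructor
  · rintro ⟨⟨hz, -⟩, hzx, hzy⟩
    refine ⟨hz, fun v hv => ?_⟩
    by_cases hvS : v ∈ S
    · rw [hξS v hvS, hzy v fun _ => hvS]
    · rw [hξ v hvS, hzx v (hv.resolve_right hvS)]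
  · rintro ⟨hz, hzξ⟩
    have hzx : ∀ v ∉ ballU1 G U S, z v = x v := fun v hv => by
      rw [hzξ v (.inl hv), hξ v fun hvS => hv (hSB hvS)]
    refine ⟨⟨hz, fun v hv => ?_⟩, hzx, fun v hv => ?_⟩
    · rw [hzx v fun hvB => hv (hBU hvB), hx.2 v (mem_compl.2 hv)]
    · by_cases hvS : v ∈ S
      · rw [hzξ v (.inr hvS), hξS v hvS]
      · have hvU : v ∉ U := fun hvU => hvS (hv hvU)
        rw [hzx v fun hvB => hvU (hBU hvB), hx.2 v (mem_compl.2 hvU), hy.2 v (mem_compl.2 hvU)]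

lemma isListColoringOn_piecewise (hx : x ∈ coloringsAgreeingOn G L Uᶜ η)
    (hy : y ∈ coloringsAgreeingOn G L Uᶜ η) :
    IsListColoringOn G L ((ballU1 G U S)ᶜ ∪ S) (S.piecewise y x) := by
  rw [mem_coloringsAgreeingOn] at hx hy
  -- an edge leaving `S` but not the ball leaves `U`, where `x` and `y` agree
  have hcross : ∀ a b, a ∈ S → b ∈ (ballU1 G U S)ᶜ ∪ S → b ∉ S → G.Adj a b → x b = y b := by
    intro a b ha hb hbS hab
    have hbU : b ∈ Uᶜ := mem_compl.2 fun hbU =>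
      mem_compl.1 ((mem_union.1 hb).resolve_right hbS) (mem_ballU1_of_adj hbU ha hab.symm)
    rw [hx.2 b hbU, hy.2 b hbU]
  refine ⟨fun v _ => ?_, fun a ha b hb hab => ?_⟩
  · by_cases hv : v ∈ S
    · rw [piecewise_eq_of_mem _ _ _ hv]; exact hy.1.1 v
    · rw [piecewise_eq_of_notMem _ _ _ hv]; exact hx.1.1 v
  by_cases haS : a ∈ S <;> by_cases hbS : b ∈ S
  · rw [piecewise_eq_of_mem _ _ _ haS, piecewise_eq_of_mem _ _ _ hbS]
    exact hy.1.2 a b hab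
  · rw [piecewise_eq_of_mem _ _ _ haS, piecewise_eq_of_notMem _ _ _ hbS, hcross a b haS hb hbS hab]
    exact hy.1.2 a b hab
  · rw [piecewise_eq_of_notMem _ _ _ haS, piecewise_eq_of_mem _ _ _ hbS,
      hcross b a hbS ha haS hab.symm]
    exact hy.1.2 a b hab
  · rw [piecewise_eq_of_notMem _ _ _ haS, piecewise_eq_of_notMem _ _ _ hbS]
    exact hx.1.2 a b hab

lemma fiberOverlap_coloringsAgreeingOn {Δ q t : ℕ} (hdeg : ∀ v, gdeg G v ≤ Δ)
    (hL : ∀ v, gdeg G v + 2 ≤ #(L v) ∧ #(L v) ≤ q) (hSU : S ⊆ U) (hS : #S ≤ t) :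
    FiberOverlap (coloringsAgreeingOn G L Uᶜ η) (ballU1 G U S)ᶜ.restrict (U \ S)ᶜ.restrict
      (((2 : ℝ) ^ Δ * q) ^ t) := by
  intro x hx y hy hxy
  have hagree : ∀ v ∈ (ballU1 G U S)ᶜ, x v = S.piecewise y x v := fun v hv =>
    (piecewise_eq_of_notMem _ _ _ fun hvS => mem_compl.1 hv (subset_ballU1 hSU hvS)).symm
  have hfiber : {z ∈ coloringsAgreeingOn G L Uᶜ η |
      (ballU1 G U S)ᶜ.restrict z = (ballU1 G U S)ᶜ.restrict x}
        = coloringsAgreeingOn G L (ballU1 G U S)ᶜ (S.piecewise y x) := by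
    rw [filter_restrict_eq_coloringsAgreeingOn ballU1_subset hx]
    ext z
    simp only [mem_coloringsAgreeingOn]
    exact and_congr_right fun _ => forall₂_congr fun v hv => by rw [hagree v hv]
  have hne := (isListColoringOn_piecewise (S := S) hx hy).coloringsAgreeingOn_nonempty
    fun v => by linarith [hL v]
  have hcount := card_coloringsAgreeingOn_le_union hdeg (fun v => (hL v).1) (fun v => (hL v).2)
    S _ hne
  obtain ⟨w, -⟩ := Function.ne_iff.1 hxy
  have hq : 1 ≤ 2 ^ Δ * q := Nat.one_le_two_pow.trans (Nat.le_mul_of_pos_right _ (by linarith [hL w]))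
  rw [hfiber, filter_restrict_and_restrict_eq_coloringsAgreeingOn hSU hx hy]
  exact_mod_cast hcount.trans (Nat.mul_le_mul_right _ (Nat.pow_le_pow_right hq hS))

lemma pmean_pvar_condD_colMu {B : Finset V} (hBU : B ⊆ U) (f : (V → C) → ℝ) :
    pmean (uniformDensity (coloringsAgreeingOn G L Uᶜ η))
        (fun σ => pvar (condD (colMu G L) B σ) f)
      = pmean (uniformDensity (coloringsAgreeingOn G L Uᶜ η)) (fun σ => pvar (uniformDensity
          {τ ∈ coloringsAgreeingOn G L Uᶜ η | Bᶜ.restrict τ = Bᶜ.restrict σ}) f) :=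
  pmean_uniformDensity_congr _ fun σ hσ => by
    rw [condD_colMu, filter_restrict_eq_coloringsAgreeingOn hBU hσ]

end Fibers

theorem list_coloring_block_factorization_of_variance_general
    {V : Type*} [Fintype V] [DecidableEq V] {C : Type*} [Fintype C] [DecidableEq C]
    (G : SimpleGraph V) (L : V → Finset C) (Δ q : ℕ)
    (hdeg : ∀ v, gdeg G v ≤ Δ)
    (hL : ∀ v, gdeg G v + 2 ≤ (L v).card ∧ (L v).card ≤ q)
    (t : ℕ) (S U : Finset V) (hSU : S ⊆ U) (hS : S.card ≤ t)
    (η : V → C)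
    (f : (V → C) → ℝ) :
    pvar (condD (colMu G L) U η) f ≤
      2 * ((2 : ℝ) ^ Δ * q) ^ t *
        (pmean (condD (colMu G L) U η)
            (fun σ => pvar (condD (colMu G L) (ballU1 G U S) σ) f) +
         pmean (condD (colMu G L) U η)
            (fun σ => pvar (condD (colMu G L) (U \ S) σ) f)) := by
  rw [condD_colMu, pmean_pvar_condD_colMu ballU1_subset, pmean_pvar_condD_colMu sdiff_subset]
  exact pvar_uniformDensity_le_of_overlap (by positivity)
    (fiberOverlap_coloringsAgreeingOn hdeg hL hSU hS) f

/-- **Block factorization of variance for list colorings.**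
If `Δ ≥ 3` bounds the maximum degree, `deg(v) + 2 ≤ |L_v| ≤ q`, `S ⊆ U ⊆ V` with
`|S| ≤ t`, then for any pinning `η` on `V ∖ U`, the conditional distribution `μ^η_U`
satisfies `{B_U(S,1), U∖S}`-factorization of variance with constant `2(2^Δ q)^t`. -/
theorem list_coloring_block_factorization_of_variance
    {V : Type*} [Fintype V] [DecidableEq V] {C : Type*} [Fintype C] [DecidableEq C]
    (G : SimpleGraph V) (L : V → Finset C) (Δ q : ℕ) (hΔ : 3 ≤ Δ)
    (hdeg : ∀ v, gdeg G v ≤ Δ)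
    (hL : ∀ v, gdeg G v + 2 ≤ (L v).card ∧ (L v).card ≤ q)
    (t : ℕ) (ht : 1 ≤ t) (S U : Finset V) (hSU : S ⊆ U) (hS : S.card ≤ t)
    (η : V → C) (hη : ∃ σ : V → C, isListColoring G L σ ∧ ∀ v, v ∉ U → σ v = η v)
    (f : (V → C) → ℝ) :
    pvar (condD (colMu G L) U η) f ≤
      2 * ((2 : ℝ) ^ Δ * q) ^ t *
        (pmean (condD (colMu G L) U η)
            (fun σ => pvar (condD (colMu G L) (ballU1 G U S) σ) f) +
         pmean (condD (colMu G L) U η)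
            (fun σ => pvar (condD (colMu G L) (U \ S) σ) f)) :=
  list_coloring_block_factorization_of_variance_general G L Δ q hdeg hL t S U hSU hS η f

end
end
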